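/- arXiv:2212.14330 — 2 statements merged into one kernel-verified Lean document; each statement's English description precedes it below -/
import Mathlib

section
/- Let 0 < α ≤ 1, q ≥ 2 with conjugate exponent q' = q/(q−1), C_μ > 0, and let μ be an α-dimensional Borel measure on ℝ with constant C_μ. Then there exists a constant C (depending only on α, q, C_μ) such that for every b > 0 and all measurable functions g, h : ℝ × ℝ → ℂ, |∫∫∫∫ g(x,t) h(x',t') 1_{(0,b)}(x − x') dμ(x) dt dμ(x') dt'| ≤ C b^{2α/q} N(g) N(h), where all four variables x, t, x', t' range over (0,1), 1_{(0,b)}(x−x') equals 1 if 0 < x − x' < b and 0 otherwise, and N(g) = (∫_{(0,1)} (∫_0^1 |g(x,t)| dt)^{q'} dμ(x))^{1/q'}. -/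
open MeasureTheory Filter Set
open scoped ENNReal NNReal

/-- The mixed norm `N(g) = ‖g‖_{L^{q'}_x(dμ) L^1_t}
  = (∫_{(0,1)} (∫_0^1 |g(x,t)| dt)^{q'} dμ(x))^{1/q'}`. -/
noncomputable def mixedNorm (μ : Measure ℝ) (q' : ℝ) (g : ℝ → ℝ → ℂ) : ℝ≥0∞ :=
  (∫⁻ x in Set.Ioo (0:ℝ) 1,
      (∫⁻ t in Set.Ioo (0:ℝ) 1, (‖g x t‖₊ : ℝ≥0∞)) ^ q' ∂μ) ^ (1 / q')

/-!
Bounding the integrand by absolute values reduces the estimate to `∫∫ G(x) K(x,x') H(x')`, where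
`G`, `H` are the `t`-integrals of `|g|`, `|h|` and `K(x,x') = 1_{(0,b)}(x - x')`. As `μ` is
`α`-dimensional, `K ≤ 1` has row and column integrals at most `M = C_μ b^α`. For such a kernel and
`p = q'`, Hölder's inequality with weight `K(x,·)` gives
`(KH)(x)^q ≤ M (K H^p)(x)^{q-1} ≤ M ‖H‖_p^{p(q-2)} (K H^p)(x)`; integrating in `x` yields
`‖KH‖_q ≤ M^{2/q} ‖H‖_p`, and a last Hölder inequality pairs this with `‖G‖_p`.
-/

section Schur

variable {X Y : Type*} [MeasurableSpace X] [MeasurableSpace Y] {μ : Measure X} {ν : Measure Y}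
  {p q : ℝ}

theorem lintegral_mul_le_weighted_holder {k H : Y → ℝ≥0∞} (hpq : p.HolderConjugate q)
    (hk : AEMeasurable k ν) (hH : AEMeasurable H ν) :
    ∫⁻ y, k y * H y ∂ν ≤ (∫⁻ y, k y ∂ν) ^ (1 / q) * (∫⁻ y, k y * H y ^ p ∂ν) ^ (1 / p) := by
  have holder := ENNReal.lintegral_mul_le_Lp_mul_Lq ν hpq.symm (f := fun y => k y ^ (1 / q))
    (g := fun y => k y ^ (1 / p) * H y) (hk.pow_const _) ((hk.pow_const _).mul hH)
  convert holder using 4 with y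
  · rw [Pi.mul_apply, ← mul_assoc, ← ENNReal.rpow_add_of_nonneg _ _ hpq.symm.one_div_nonneg
      hpq.one_div_nonneg, hpq.symm.one_div_add_one_div, div_one, ENNReal.rpow_one]
  · ext y
    rw [← ENNReal.rpow_mul, one_div_mul_cancel hpq.symm.ne_zero, ENNReal.rpow_one]
  · ext y
    rw [ENNReal.mul_rpow_of_nonneg _ _ hpq.nonneg, ← ENNReal.rpow_mul,
      one_div_mul_cancel hpq.ne_zero, ENNReal.rpow_one]

variable {K : X → Y → ℝ≥0∞} {M : ℝ≥0∞}

theorem rpow_lintegral_kernel_mul_le (hpq : p.HolderConjugate q)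
    (hK : Measurable (Function.uncurry K))
    (hcol : ∀ x, ∫⁻ y, K x y ∂ν ≤ M) {H : Y → ℝ≥0∞} (hH : Measurable H) (x : X) :
    (∫⁻ y, K x y * H y ∂ν) ^ q ≤ M * (∫⁻ y, K x y * H y ^ p ∂ν) ^ (q - 1) :=
  calc (∫⁻ y, K x y * H y ∂ν) ^ q
      ≤ ((∫⁻ y, K x y ∂ν) ^ (1 / q) * (∫⁻ y, K x y * H y ^ p ∂ν) ^ (1 / p)) ^ q :=
        ENNReal.rpow_le_rpow (lintegral_mul_le_weighted_holder hpq
          hK.of_uncurry_left.aemeasurable hH.aemeasurable) hpq.symm.nonneg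
    _ = (∫⁻ y, K x y ∂ν) * (∫⁻ y, K x y * H y ^ p ∂ν) ^ (q - 1) := by
        rw [ENNReal.mul_rpow_of_nonneg _ _ hpq.symm.nonneg, ← ENNReal.rpow_mul,
          ← ENNReal.rpow_mul, one_div_mul_cancel hpq.symm.ne_zero, ENNReal.rpow_one,
          one_div_mul_eq_div, hpq.symm.div_conj_eq_sub_one]
    _ ≤ M * (∫⁻ y, K x y * H y ^ p ∂ν) ^ (q - 1) := by gcongr; exact hcol x

theorem lintegral_lintegral_kernel_mul_le [SFinite μ] [SFinite ν]
    (hK : Measurable (Function.uncurry K))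
    (hrow : ∀ y, ∫⁻ x, K x y ∂μ ≤ M) {F : Y → ℝ≥0∞} (hF : Measurable F) :
    ∫⁻ x, ∫⁻ y, K x y * F y ∂ν ∂μ ≤ M * ∫⁻ y, F y ∂ν :=
  calc ∫⁻ x, ∫⁻ y, K x y * F y ∂ν ∂μ
    _ = ∫⁻ y, (∫⁻ x, K x y ∂μ) * F y ∂ν := by
        rw [lintegral_lintegral_swap (hK.mul (hF.comp measurable_snd)).aemeasurable]
        exact lintegral_congr fun y => lintegral_mul_const _ (hK.of_uncurry_right)
    _ ≤ ∫⁻ y, M * F y ∂ν := by gcongr with y; exact hrow y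
    _ = M * ∫⁻ y, F y ∂ν := lintegral_const_mul _ hF

theorem lintegral_rpow_lintegral_kernel_mul_le [SFinite μ] [SFinite ν]
    (hpq : p.HolderConjugate q) (hq : 2 ≤ q)
    (hK : Measurable (Function.uncurry K)) (hK1 : ∀ x y, K x y ≤ 1)
    (hrow : ∀ y, ∫⁻ x, K x y ∂μ ≤ M) (hcol : ∀ x, ∫⁻ y, K x y ∂ν ≤ M)
    {H : Y → ℝ≥0∞} (hH : Measurable H) :
    ∫⁻ x, (∫⁻ y, K x y * H y ∂ν) ^ q ∂μ ≤ M ^ 2 * (∫⁻ y, H y ^ p ∂ν) ^ (q - 1) := by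
  set B := ∫⁻ y, H y ^ p ∂ν
  set Ψ := fun x => ∫⁻ y, K x y * H y ^ p ∂ν
  have hΨ : Measurable Ψ := (hK.mul ((hH.comp measurable_snd).pow_const p)).lintegral_prod_right'
  have hΨB (x : X) : Ψ x ≤ B := lintegral_mono fun y => mul_le_of_le_one_left' (hK1 x y)
  have hpow (x : X) : (∫⁻ y, K x y * H y ∂ν) ^ q ≤ M * (B ^ (q - 2) * Ψ x) :=
    calc (∫⁻ y, K x y * H y ∂ν) ^ q ≤ M * Ψ x ^ (q - 2 + 1) := by
          rw [show q - 2 + 1 = q - 1 by ring]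
          exact rpow_lintegral_kernel_mul_le hpq hK hcol hH x
      _ ≤ M * (B ^ (q - 2) * Ψ x) := by
          rw [ENNReal.rpow_add_of_nonneg _ _ (by linarith) zero_le_one, ENNReal.rpow_one]
          gcongr
          exact hΨB x
  calc ∫⁻ x, (∫⁻ y, K x y * H y ∂ν) ^ q ∂μ
    _ ≤ ∫⁻ x, M * (B ^ (q - 2) * Ψ x) ∂μ := lintegral_mono hpow
    _ = M * (B ^ (q - 2) * ∫⁻ x, Ψ x ∂μ) := by
        rw [lintegral_const_mul _ (hΨ.const_mul _), lintegral_const_mul _ hΨ]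
    _ ≤ M * (B ^ (q - 2) * (M * B)) := by
        gcongr
        exact lintegral_lintegral_kernel_mul_le hK hrow (hH.pow_const p)
    _ = M ^ 2 * B ^ (q - 1) := by
        rw [show q - 1 = q - 2 + 1 by ring,
          ENNReal.rpow_add_of_nonneg _ _ (by linarith) zero_le_one, ENNReal.rpow_one]
        ring

theorem lintegral_mul_lintegral_kernel_mul_le [SFinite μ] [SFinite ν]
    (hpq : p.HolderConjugate q) (hq : 2 ≤ q)
    (hK : Measurable (Function.uncurry K)) (hK1 : ∀ x y, K x y ≤ 1)
    (hrow : ∀ y, ∫⁻ x, K x y ∂μ ≤ M) (hcol : ∀ x, ∫⁻ y, K x y ∂ν ≤ M)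
    {G : X → ℝ≥0∞} {H : Y → ℝ≥0∞} (hG : Measurable G) (hH : Measurable H) :
    ∫⁻ x, G x * ∫⁻ y, K x y * H y ∂ν ∂μ ≤
      M ^ (2 / q) * (∫⁻ x, G x ^ p ∂μ) ^ (1 / p) * (∫⁻ y, H y ^ p ∂ν) ^ (1 / p) := by
  have hΦ : Measurable fun x => ∫⁻ y, K x y * H y ∂ν :=
    (hK.mul (hH.comp measurable_snd)).lintegral_prod_right'
  have hexp : (q - 1) * (1 / q) = 1 / p := by
    rw [sub_mul, one_mul, mul_one_div_cancel hpq.symm.ne_zero, one_div, one_div,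
      hpq.symm.one_sub_inv]
  calc ∫⁻ x, G x * ∫⁻ y, K x y * H y ∂ν ∂μ
      ≤ (∫⁻ x, G x ^ p ∂μ) ^ (1 / p) * (∫⁻ x, (∫⁻ y, K x y * H y ∂ν) ^ q ∂μ) ^ (1 / q) :=
        ENNReal.lintegral_mul_le_Lp_mul_Lq μ hpq hG.aemeasurable hΦ.aemeasurable
    _ ≤ (∫⁻ x, G x ^ p ∂μ) ^ (1 / p) * (M ^ 2 * (∫⁻ y, H y ^ p ∂ν) ^ (q - 1)) ^ (1 / q) := by
        gcongr
        exact lintegral_rpow_lintegral_kernel_mul_le hpq hq hK hK1 hrow hcol hH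
    _ = M ^ (2 / q) * (∫⁻ x, G x ^ p ∂μ) ^ (1 / p) * (∫⁻ y, H y ^ p ∂ν) ^ (1 / p) := by
        rw [ENNReal.mul_rpow_of_nonneg _ _ hpq.symm.one_div_nonneg, ← ENNReal.rpow_natCast_mul,
          ← ENNReal.rpow_mul, hexp, Nat.cast_ofNat, mul_one_div]
        ring

end Schur

theorem enorm_integral_ite_mul_le {X T Y S 𝕜 : Type*} [MeasurableSpace X] [MeasurableSpace T]
    [MeasurableSpace Y] [MeasurableSpace S] [RCLike 𝕜] (μ : Measure X) (τ : Measure T)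
    (ν : Measure Y) (σ : Measure S) (P : X → Y → Prop) [∀ x y, Decidable (P x y)]
    {g : X → T → 𝕜} {h : Y → S → 𝕜} (hg : ∀ x, Measurable (g x)) :
    ‖∫ x, ∫ t, ∫ y, ∫ s, (if P x y then g x t * h y s else 0) ∂σ ∂ν ∂τ ∂μ‖ₑ ≤
      ∫⁻ x, (∫⁻ t, ‖g x t‖ₑ ∂τ) *
        ∫⁻ y, (if P x y then 1 else 0) * ∫⁻ s, ‖h y s‖ₑ ∂σ ∂ν ∂μ := by
  refine (enorm_integral_le_lintegral_enorm _).trans (lintegral_mono fun x => ?_)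
  have hts (t : T) (y : Y) : ‖∫ s, (if P x y then g x t * h y s else 0) ∂σ‖ₑ ≤
      ‖g x t‖ₑ * ((if P x y then 1 else 0) * ∫⁻ s, ‖h y s‖ₑ ∂σ) := by
    refine (enorm_integral_le_lintegral_enorm _).trans_eq ?_
    split_ifs <;> simp [enorm_mul, lintegral_const_mul' _ _ enorm_ne_top]
  calc ‖∫ t, ∫ y, ∫ s, (if P x y then g x t * h y s else 0) ∂σ ∂ν ∂τ‖ₑ
      ≤ ∫⁻ t, ∫⁻ y, ‖g x t‖ₑ * ((if P x y then 1 else 0) * ∫⁻ s, ‖h y s‖ₑ ∂σ) ∂ν ∂τ :=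
        (enorm_integral_le_lintegral_enorm _).trans (lintegral_mono fun t =>
          (enorm_integral_le_lintegral_enorm _).trans (lintegral_mono fun y => hts t y))
    _ = (∫⁻ t, ‖g x t‖ₑ ∂τ) * ∫⁻ y, (if P x y then 1 else 0) * ∫⁻ s, ‖h y s‖ₑ ∂σ ∂ν := by
        simp_rw [lintegral_const_mul' _ _ enorm_ne_top]
        exact lintegral_mul_const _ (hg x).enorm

theorem setLIntegral_ite_le_of_subset_ball {α Cμ b : ℝ} {μ : Measure ℝ}
    (hμ : ∀ x : ℝ, ∀ r : ℝ, 0 < r → μ (Metric.ball x r) ≤ ENNReal.ofReal (Cμ * r ^ α))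
    (hb : 0 < b) (s : Set ℝ) {P : ℝ → Prop} [DecidablePred P] (c : ℝ)
    (hP : ∀ x, P x → dist x c < b) :
    ∫⁻ x in s, (if P x then 1 else 0) ∂μ ≤ ENNReal.ofReal (Cμ * b ^ α) :=
  calc ∫⁻ x in s, (if P x then 1 else 0) ∂μ
    _ = ∫⁻ x in s, {x | P x}.indicator 1 x ∂μ := by
        simp only [Set.indicator_apply, Set.mem_ofPred_eq, Pi.one_apply]
    _ ≤ μ.restrict s {x | P x} := lintegral_indicator_one_le _
    _ ≤ μ (Metric.ball c b) := (Measure.restrict_apply_le _ _).trans (measure_mono hP)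
    _ ≤ ENNReal.ofReal (Cμ * b ^ α) := hμ c b hb

theorem stmt7_general (α q Cμ : ℝ) (hq : 2 ≤ q) (hCμ : 0 < Cμ)
    (μ : Measure ℝ)
    (hμ : ∀ x : ℝ, ∀ r : ℝ, 0 < r → μ (Metric.ball x r) ≤ ENNReal.ofReal (Cμ * r ^ α)) :
    ∃ C > 0, ∀ b : ℝ, 0 < b → ∀ g h : ℝ → ℝ → ℂ,
      Measurable (Function.uncurry g) → Measurable (Function.uncurry h) →
      ENNReal.ofReal (norm
        (∫ x in Set.Ioo (0:ℝ) 1, ∫ t in Set.Ioo (0:ℝ) 1, ∫ x' in Set.Ioo (0:ℝ) 1,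
          ∫ t' in Set.Ioo (0:ℝ) 1,
            (if x - x' ∈ Set.Ioo (0:ℝ) b then g x t * h x' t' else 0)
          ∂volume ∂μ ∂volume ∂μ)) ≤
      ENNReal.ofReal (C * b ^ (2 * α / q)) *
        mixedNorm μ (q / (q - 1)) g * mixedNorm μ (q / (q - 1)) h := by
  have hpq : (q / (q - 1)).HolderConjugate q :=
    (Real.HolderConjugate.conjExponent (by linarith)).symm
  refine ⟨Cμ ^ (2 / q), by positivity, fun b hb g h hg hh => ?_⟩
  have hK : Measurable (Function.uncurry fun x x' : ℝ =>
      if x - x' ∈ Ioo (0:ℝ) b then (1 : ℝ≥0∞) else 0) :=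
    Measurable.ite ((measurable_fst.sub measurable_snd) measurableSet_Ioo) measurable_const
      measurable_const
  have hdist {x x' : ℝ} (hx : x - x' ∈ Ioo 0 b) : dist x x' < b := by
    rw [Real.dist_eq, abs_lt]
    constructor <;> linarith [hx.1, hx.2]
  have hM : ENNReal.ofReal (Cμ * b ^ α) ^ (2 / q) =
      ENNReal.ofReal (Cμ ^ (2 / q) * b ^ (2 * α / q)) := by
    rw [ENNReal.ofReal_rpow_of_nonneg (by positivity) (by positivity),
      Real.mul_rpow hCμ.le (by positivity), ← Real.rpow_mul hb.le, mul_comm α, div_mul_eq_mul_div]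
  have : IsLocallyFiniteMeasure μ :=
    ⟨fun x => ⟨_, Metric.ball_mem_nhds x one_pos,
      (hμ x 1 one_pos).trans_lt ENNReal.ofReal_lt_top⟩⟩
  rw [ofReal_norm, ← hM]
  refine (enorm_integral_ite_mul_le _ _ _ _ _ fun x => hg.of_uncurry_left).trans ?_
  exact lintegral_mul_lintegral_kernel_mul_le hpq hq hK (fun _ _ => by split_ifs <;> simp)
    (fun x' => setLIntegral_ite_le_of_subset_ball hμ hb _ x' fun x hx => hdist hx)
    (fun x => setLIntegral_ite_le_of_subset_ball hμ hb _ x fun x' hx =>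
      (dist_comm x' x).trans_lt (hdist hx))
    hg.enorm.lintegral_prod_right' hh.enorm.lintegral_prod_right'

/-- Lemma 2.1, estimate (6): the bilinear estimate with kernel `1_{(0,b)}(x − x')` for an
`α`-dimensional measure `μ` with constant `C_μ`. -/
theorem stmt7 (α q Cμ : ℝ) (hα : 0 < α) (hα1 : α ≤ 1) (hq : 2 ≤ q) (hCμ : 0 < Cμ)
    (μ : Measure ℝ)
    (hμ : ∀ x : ℝ, ∀ r : ℝ, 0 < r → μ (Metric.ball x r) ≤ ENNReal.ofReal (Cμ * r ^ α)) :
    ∃ C > 0, ∀ b : ℝ, 0 < b → ∀ g h : ℝ → ℝ → ℂ,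
      Measurable (Function.uncurry g) → Measurable (Function.uncurry h) →
      ENNReal.ofReal (norm
        (∫ x in Set.Ioo (0:ℝ) 1, ∫ t in Set.Ioo (0:ℝ) 1, ∫ x' in Set.Ioo (0:ℝ) 1,
          ∫ t' in Set.Ioo (0:ℝ) 1,
            (if x - x' ∈ Set.Ioo (0:ℝ) b then g x t * h x' t' else 0)
          ∂volume ∂μ ∂volume ∂μ)) ≤
      ENNReal.ofReal (C * b ^ (2 * α / q)) *
        mixedNorm μ (q / (q - 1)) g * mixedNorm μ (q / (q - 1)) h :=
  stmt7_general α q Cμ hq hCμ μ hμ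
end

section
/- Let 0 < α ≤ 1, q ≥ 2 with conjugate exponent q' = q/(q−1), C_μ > 0, let μ be an α-dimensional Borel measure on ℝ with constant C_μ, and let ρ satisfy 0 < qρ/2 < α. Then there exists a constant C (depending only on α, q, ρ, C_μ) such that for all measurable functions g, h : ℝ × ℝ → ℂ, |∫∫∫∫ g(x,t) h(x',t') |x − x'|^{−ρ} dμ(x) dt dμ(x') dt'| ≤ C N(g) N(h), where all four variables x, t, x', t' range over (0,1) and N(g) = (∫_{(0,1)} (∫_0^1 |g(x,t)| dt)^{q'} dμ(x))^{1/q'}. -/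
open MeasureTheory Filter Set
open scoped ENNReal NNReal

/-!
Put `G x = ∫₀¹ |g(x,t)| dt`, `H` likewise, and `K(x,x') = |x - x'|^(-ρ)`; the form is bounded by
`∫∫ G(x) K(x,x') H(x') dμ dμ` over `(0,1)²`. Cutting `B(x,1)` into dyadic shells and using
`μ(B(x,r)) ≤ C_μ r^α` bounds the row and column integrals of `K^(q/2)` by a geometric series,
which converges because `qρ/2 < α`. Young's inequality for kernels with exponents
`1/q' + 1/q' + 1/(q/2) = 2`, which is Hölder's inequality for three factors on the product
space, then gives the estimate.
-/

open Function

theorem exists_two_rpow_neg_lt_le {d : ℝ} (hd0 : 0 < d) (hd1 : d ≤ 1) :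
    ∃ j : ℕ, (2:ℝ) ^ (-(j:ℝ) - 1) < d ∧ d ≤ 2 ^ (-(j:ℝ)) := by
  have half_pow (n : ℕ) : (1 / 2 : ℝ) ^ n = 2 ^ (-(n:ℝ)) := by
    rw [Real.rpow_neg zero_le_two, Real.rpow_natCast, one_div, inv_pow]
  obtain ⟨j, hj⟩ := exists_nat_pow_near_of_lt_one hd0 hd1 one_half_pos one_half_lt_one
  refine ⟨j, ?_⟩
  rwa [half_pow, half_pow, Nat.cast_succ, neg_add'] at hj

section DyadicShell

variable {X : Type*} [PseudoMetricSpace X]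

def dyadicShell (x : X) (j : ℕ) : Set X :=
  {y | (2:ℝ) ^ (-(j:ℝ) - 1) < dist x y ∧ dist x y ≤ 2 ^ (-(j:ℝ))}

theorem measurableSet_dyadicShell [MeasurableSpace X] [OpensMeasurableSpace X] (x : X) (j : ℕ) :
    MeasurableSet (dyadicShell x j) := by
  have hdist : Measurable (dist x) := (continuous_const.dist continuous_id).measurable
  exact (measurableSet_lt measurable_const hdist).inter (measurableSet_le hdist measurable_const)

theorem rpow_neg_dist_le_tsum_indicator_dyadicShell {β : ℝ} (hβ : 0 < β) {x y : X}
    (hy : y ∈ Metric.ball x 1) :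
    ENNReal.ofReal (dist x y ^ (-β)) ≤ ∑' j, (dyadicShell x j).indicator
      (fun _ => ENNReal.ofReal (((2:ℝ) ^ (-(j:ℝ) - 1)) ^ (-β))) y := by
  rcases (dist_nonneg : 0 ≤ dist x y).eq_or_lt with h0 | hpos
  · -- the junk value `0 ^ (-β) = 0` makes the diagonal contribute nothing
    simp [← h0, Real.zero_rpow (neg_ne_zero.2 hβ.ne')]
  obtain ⟨j, hj⟩ := exists_two_rpow_neg_lt_le hpos (by rw [dist_comm]; exact hy.out.le)
  refine le_trans ?_ (ENNReal.le_tsum j)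
  rw [indicator_of_mem (show y ∈ dyadicShell x j from hj)]
  exact ENNReal.ofReal_le_ofReal
    (Real.rpow_le_rpow_of_nonpos (by positivity) hj.1.le (by linarith))

theorem rpow_neg_mul_measure_dyadicShell_le [MeasurableSpace X] {μ : Measure X} {α Cμ β : ℝ}
    (hμ : ∀ x r, 0 < r → μ (Metric.ball x r) ≤ ENNReal.ofReal (Cμ * r ^ α)) (x : X) (j : ℕ) :
    ENNReal.ofReal (((2:ℝ) ^ (-(j:ℝ) - 1)) ^ (-β)) * μ (dyadicShell x j) ≤
      ENNReal.ofReal (Cμ * 2 ^ (α + β) * ((2:ℝ) ^ (β - α)) ^ j) := by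
  have hsub : dyadicShell x j ⊆ Metric.ball x (2 ^ (1 - (j:ℝ))) := fun y hy => by
    rw [Metric.mem_ball, dist_comm]
    exact hy.2.trans_lt (Real.rpow_lt_rpow_of_exponent_lt one_lt_two (by linarith))
  have hreal : ((2:ℝ) ^ (-(j:ℝ) - 1)) ^ (-β) * (Cμ * ((2:ℝ) ^ (1 - (j:ℝ))) ^ α) =
      Cμ * 2 ^ (α + β) * ((2:ℝ) ^ (β - α)) ^ j := by
    rw [← Real.rpow_mul zero_le_two, ← Real.rpow_mul zero_le_two,
      ← Real.rpow_mul_natCast zero_le_two, mul_assoc, ← Real.rpow_add two_pos,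
      mul_left_comm, ← Real.rpow_add two_pos]
    ring_nf
  calc ENNReal.ofReal (((2:ℝ) ^ (-(j:ℝ) - 1)) ^ (-β)) * μ (dyadicShell x j)
      ≤ ENNReal.ofReal (((2:ℝ) ^ (-(j:ℝ) - 1)) ^ (-β)) *
          ENNReal.ofReal (Cμ * ((2:ℝ) ^ (1 - (j:ℝ))) ^ α) := by
        gcongr
        exact (measure_mono hsub).trans (hμ x _ (by positivity))
    _ = _ := by rw [← ENNReal.ofReal_mul (by positivity), hreal]

theorem lintegral_ball_rpow_neg_dist_le [MeasurableSpace X] [OpensMeasurableSpace X]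
    {μ : Measure X} {α Cμ β : ℝ}
    (hμ : ∀ x r, 0 < r → μ (Metric.ball x r) ≤ ENNReal.ofReal (Cμ * r ^ α))
    (hβ : 0 < β) (hβα : β < α) (x : X) :
    ∫⁻ y in Metric.ball x 1, ENNReal.ofReal (dist x y ^ (-β)) ∂μ ≤
      ENNReal.ofReal (Cμ * 2 ^ (α + β) * (1 - 2 ^ (β - α))⁻¹) := by
  have hr0 : (0:ℝ) ≤ 2 ^ (β - α) := by positivity
  have hr1 : (2:ℝ) ^ (β - α) < 1 := Real.rpow_lt_one_of_one_lt_of_neg one_lt_two (by linarith)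
  calc ∫⁻ y in Metric.ball x 1, ENNReal.ofReal (dist x y ^ (-β)) ∂μ
      ≤ ∫⁻ y, ∑' j, (dyadicShell x j).indicator
          (fun _ => ENNReal.ofReal (((2:ℝ) ^ (-(j:ℝ) - 1)) ^ (-β))) y ∂μ :=
        (setLIntegral_mono' measurableSet_ball fun y hy =>
          rpow_neg_dist_le_tsum_indicator_dyadicShell hβ hy).trans (setLIntegral_le_lintegral _ _)
    _ = ∑' j : ℕ, ENNReal.ofReal (((2:ℝ) ^ (-(j:ℝ) - 1)) ^ (-β)) * μ (dyadicShell x j) := by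
        rw [lintegral_tsum fun j =>
          (measurable_const.indicator (measurableSet_dyadicShell x j)).aemeasurable]
        simp only [lintegral_indicator_const (measurableSet_dyadicShell x _)]
    _ ≤ ∑' j : ℕ, ENNReal.ofReal (Cμ * 2 ^ (α + β) * ((2:ℝ) ^ (β - α)) ^ j) :=
        ENNReal.tsum_le_tsum (rpow_neg_mul_measure_dyadicShell_le hμ x)
    _ = ENNReal.ofReal (Cμ * 2 ^ (α + β) * (1 - 2 ^ (β - α))⁻¹) := by
        simp only [ENNReal.ofReal_mul' (pow_nonneg hr0 _), ENNReal.tsum_mul_left]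
        rw [ENNReal.ofReal_mul' (inv_nonneg.2 (sub_nonneg.2 hr1.le)),
          ← tsum_geometric_of_lt_one hr0 hr1,
          ENNReal.ofReal_tsum_of_nonneg (pow_nonneg hr0) (summable_geometric_of_lt_one hr0 hr1)]

end DyadicShell

theorem lintegral_Ioo_rpow_neg_abs_sub_le {μ : Measure ℝ} {α Cμ β : ℝ}
    (hμ : ∀ x r, 0 < r → μ (Metric.ball x r) ≤ ENNReal.ofReal (Cμ * r ^ α))
    (hβ : 0 < β) (hβα : β < α) {x : ℝ} (hx : x ∈ Ioo (0:ℝ) 1) :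
    ∫⁻ y in Ioo (0:ℝ) 1, ENNReal.ofReal (|x - y| ^ (-β)) ∂μ ≤
      ENNReal.ofReal (Cμ * 2 ^ (α + β) * (1 - 2 ^ (β - α))⁻¹) := by
  refine (lintegral_mono_set fun y hy => ?_).trans (lintegral_ball_rpow_neg_dist_le hμ hβ hβα x)
  rw [Metric.mem_ball, Real.dist_eq, abs_lt]
  constructor <;> linarith [hx.1, hx.2, hy.1, hy.2]

theorem ENNReal.lintegral_mul_rpow_mul_rpow_mul_rpow_le {Z : Type*} [MeasurableSpace Z]
    {μ : Measure Z} {f g k : Z → ℝ≥0∞}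
    (hf : AEMeasurable f μ) (hg : AEMeasurable g μ) (hk : AEMeasurable k μ)
    {a b c : ℝ} (ha : 0 ≤ a) (hb : 0 ≤ b) (hc : 0 ≤ c) (habc : a + b + c = 1) :
    ∫⁻ z, f z ^ a * g z ^ b * k z ^ c ∂μ ≤
      (∫⁻ z, f z ∂μ) ^ a * (∫⁻ z, g z ∂μ) ^ b * (∫⁻ z, k z ∂μ) ^ c := by
  simpa [Fin.prod_univ_three, Fin.sum_univ_three] using
    ENNReal.lintegral_prod_norm_pow_le (μ := μ) Finset.univ (f := ![f, g, k]) (p := ![a, b, c])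
      (by simp [Fin.forall_fin_succ, hf, hg, hk]) (by simpa [Fin.sum_univ_three] using habc)
      (by simp [Fin.forall_fin_succ, ha, hb, hc])

theorem ENNReal.mul_rpow_mul_rpow_mul_rpow_eq {x y z : ℝ≥0∞} {a b c p q r : ℝ}
    (hp : 0 ≤ p) (hq : 0 ≤ q) (hr : 0 ≤ r) (ha : 0 ≤ a) (hb : 0 ≤ b) (hc : 0 ≤ c)
    (hx : p * (a + c) = 1) (hy : q * (b + c) = 1) (hz : r * (a + b) = 1) :
    (x ^ p * z ^ r) ^ a * (y ^ q * z ^ r) ^ b * (x ^ p * y ^ q) ^ c = x * z * y := by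
  simp only [ENNReal.mul_rpow_of_nonneg _ _ ha, ENNReal.mul_rpow_of_nonneg _ _ hb,
    ENNReal.mul_rpow_of_nonneg _ _ hc, ← ENNReal.rpow_mul]
  calc _ = (x ^ (p * a) * x ^ (p * c)) * (z ^ (r * a) * z ^ (r * b)) *
        (y ^ (q * b) * y ^ (q * c)) := by ring
    _ = x * z * y := by
      rw [← ENNReal.rpow_add_of_nonneg _ _ (by positivity) (by positivity),
        ← ENNReal.rpow_add_of_nonneg _ _ (by positivity) (by positivity),
        ← ENNReal.rpow_add_of_nonneg _ _ (by positivity) (by positivity),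
        ← mul_add, ← mul_add, ← mul_add, hx, hy, hz]
      simp only [ENNReal.rpow_one]

theorem lintegral_lintegral_mul_le_of_ae_lintegral_le {X Y : Type*} [MeasurableSpace X] [MeasurableSpace Y]
    {μ : Measure X} {ν : Measure Y} {F : X → ℝ≥0∞} {L : X → Y → ℝ≥0∞} {A : ℝ≥0∞}
    (hF : Measurable F) (hL : Measurable (uncurry L)) (h : ∀ᵐ x ∂μ, ∫⁻ y, L x y ∂ν ≤ A) :
    ∫⁻ x, ∫⁻ y, F x * L x y ∂ν ∂μ ≤ (∫⁻ x, F x ∂μ) * A := by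
  rw [← lintegral_mul_const _ hF]
  refine lintegral_mono_ae (h.mono fun x hx => ?_)
  rw [lintegral_const_mul _ hL.of_uncurry_left]
  gcongr

theorem lintegral_lintegral_mul_kernel_le {X Y : Type*} [MeasurableSpace X] [MeasurableSpace Y]
    {μ : Measure X} {ν : Measure Y} [SFinite μ] [SFinite ν] {p q r : ℝ}
    (hp : 1 ≤ p) (hq : 1 ≤ q) (hr : 1 ≤ r) (hpqr : 1 / p + 1 / q + 1 / r = 2)
    {G : X → ℝ≥0∞} {H : Y → ℝ≥0∞} {K : X → Y → ℝ≥0∞}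
    (hG : Measurable G) (hH : Measurable H) (hK : Measurable (uncurry K))
    {A : ℝ≥0∞} (hrow : ∀ᵐ x ∂μ, ∫⁻ y, K x y ^ r ∂ν ≤ A)
    (hcol : ∀ᵐ y ∂ν, ∫⁻ x, K x y ^ r ∂μ ≤ A) :
    ∫⁻ x, ∫⁻ y, G x * K x y * H y ∂ν ∂μ ≤
      A ^ (1 / r) * (∫⁻ x, G x ^ p ∂μ) ^ (1 / p) * (∫⁻ y, H y ^ q ∂ν) ^ (1 / q) := by
  have hp0 : p ≠ 0 := by positivity
  have hq0 : q ≠ 0 := by positivity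
  have hr0 : r ≠ 0 := by positivity
  have hp' : 0 ≤ 1 - 1 / p := sub_nonneg.2 ((div_le_one (by linarith)).2 hp)
  have hq' : 0 ≤ 1 - 1 / q := sub_nonneg.2 ((div_le_one (by linarith)).2 hq)
  have hr' : 0 ≤ 1 - 1 / r := sub_nonneg.2 ((div_le_one (by linarith)).2 hr)
  set IG := ∫⁻ x, G x ^ p ∂μ
  set IH := ∫⁻ y, H y ^ q ∂ν
  have hGK : ∫⁻ z, G z.1 ^ p * K z.1 z.2 ^ r ∂μ.prod ν ≤ IG * A := by
    rw [lintegral_prod _ (by fun_prop)]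
    exact lintegral_lintegral_mul_le_of_ae_lintegral_le (hG.pow_const p) (hK.pow_const r) hrow
  have hHK : ∫⁻ z, H z.2 ^ q * K z.1 z.2 ^ r ∂μ.prod ν ≤ IH * A := by
    rw [lintegral_prod_symm _ (by fun_prop)]
    exact lintegral_lintegral_mul_le_of_ae_lintegral_le (hH.pow_const q)
      ((hK.pow_const r).comp measurable_swap) hcol
  have hGH : ∫⁻ z, G z.1 ^ p * H z.2 ^ q ∂μ.prod ν = IG * IH :=
    lintegral_prod_mul (hG.pow_const p).aemeasurable (hH.pow_const q).aemeasurable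
  -- each of `G`, `K`, `H` ends up with total exponent one, by the relation `hpqr`
  calc ∫⁻ x, ∫⁻ y, G x * K x y * H y ∂ν ∂μ
      = ∫⁻ z, (G z.1 ^ p * K z.1 z.2 ^ r) ^ (1 - 1 / q) *
          (H z.2 ^ q * K z.1 z.2 ^ r) ^ (1 - 1 / p) *
          (G z.1 ^ p * H z.2 ^ q) ^ (1 - 1 / r) ∂μ.prod ν := by
        rw [lintegral_prod _ (by fun_prop)]
        refine lintegral_congr fun x => lintegral_congr fun y => ?_
        rw [ENNReal.mul_rpow_mul_rpow_mul_rpow_eq (by linarith) (by linarith) (by linarith)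
          hq' hp' hr']
        · rw [show 1 - 1 / q + (1 - 1 / r) = 1 / p by linarith, mul_one_div_cancel hp0]
        · rw [show 1 - 1 / p + (1 - 1 / r) = 1 / q by linarith, mul_one_div_cancel hq0]
        · rw [show 1 - 1 / q + (1 - 1 / p) = 1 / r by linarith, mul_one_div_cancel hr0]
    _ ≤ (IG * A) ^ (1 - 1 / q) * (IH * A) ^ (1 - 1 / p) * (IG * IH) ^ (1 - 1 / r) := by
        refine (ENNReal.lintegral_mul_rpow_mul_rpow_mul_rpow_le (by fun_prop) (by fun_prop)
          (by fun_prop) hq' hp' hr' (by linarith)).trans ?_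
        rw [hGH]
        gcongr
    _ = A ^ (1 - 1 / q + (1 - 1 / p)) * IG ^ (1 - 1 / q + (1 - 1 / r)) *
          IH ^ (1 - 1 / p + (1 - 1 / r)) := by
        simp only [ENNReal.mul_rpow_of_nonneg _ _ hq', ENNReal.mul_rpow_of_nonneg _ _ hp',
          ENNReal.mul_rpow_of_nonneg _ _ hr', ENNReal.rpow_add_of_nonneg _ _ hq' hp',
          ENNReal.rpow_add_of_nonneg _ _ hq' hr', ENNReal.rpow_add_of_nonneg _ _ hp' hr']
        ring
    _ = A ^ (1 / r) * IG ^ (1 / p) * IH ^ (1 / q) := by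
        congr 3 <;> linarith

theorem enorm_integral_bilinear_le {X T 𝕜 : Type*} [MeasurableSpace X] [MeasurableSpace T]
    [RCLike 𝕜] {μ : Measure X} {τ : Measure T} {g h : X → T → 𝕜} {k : X → X → 𝕜}
    (hg : ∀ x, AEMeasurable (g x) τ) :
    ‖∫ x, ∫ t, ∫ x', ∫ t', g x t * h x' t' * k x x' ∂τ ∂μ ∂τ ∂μ‖ₑ ≤
      ∫⁻ x, ∫⁻ x', (∫⁻ t, ‖g x t‖ₑ ∂τ) * ‖k x x'‖ₑ * (∫⁻ t', ‖h x' t'‖ₑ ∂τ) ∂μ ∂μ := by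
  refine (enorm_integral_le_lintegral_enorm _).trans (lintegral_mono fun x => ?_)
  calc ‖∫ t, ∫ x', ∫ t', g x t * h x' t' * k x x' ∂τ ∂μ ∂τ‖ₑ
      ≤ ∫⁻ t, ∫⁻ x', ∫⁻ t', ‖g x t‖ₑ * ‖h x' t'‖ₑ * ‖k x x'‖ₑ ∂τ ∂μ ∂τ := by
        refine (enorm_integral_le_lintegral_enorm _).trans (lintegral_mono fun t => ?_)
        refine (enorm_integral_le_lintegral_enorm _).trans (lintegral_mono fun x' => ?_)
        refine (enorm_integral_le_lintegral_enorm _).trans (lintegral_mono fun t' => ?_)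
        simp only [enorm_mul, le_refl]
    _ = (∫⁻ t, ‖g x t‖ₑ ∂τ) * ∫⁻ x', ‖k x x'‖ₑ * ∫⁻ t', ‖h x' t'‖ₑ ∂τ ∂μ := by
        have inner (t : T) (x' : X) : ∫⁻ t', ‖g x t‖ₑ * ‖h x' t'‖ₑ * ‖k x x'‖ₑ ∂τ =
            ‖g x t‖ₑ * (‖k x x'‖ₑ * ∫⁻ t', ‖h x' t'‖ₑ ∂τ) := by
          simp_rw [mul_right_comm _ _ ‖k x x'‖ₑ]
          rw [lintegral_const_mul' _ _ (ENNReal.mul_ne_top enorm_ne_top enorm_ne_top), mul_assoc]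
        simp_rw [inner, lintegral_const_mul' _ _ enorm_ne_top]
        exact lintegral_mul_const'' _ (hg x).enorm
    _ ≤ ∫⁻ x', (∫⁻ t, ‖g x t‖ₑ ∂τ) * ‖k x x'‖ₑ * (∫⁻ t', ‖h x' t'‖ₑ ∂τ) ∂μ := by
        simp only [mul_assoc]
        exact lintegral_const_mul_le _ _

theorem stmt8_general (α q Cμ ρ : ℝ) (hq : 2 ≤ q) (hCμ : 0 < Cμ)
    (μ : Measure ℝ)
    (hμ : ∀ x : ℝ, ∀ r : ℝ, 0 < r → μ (Metric.ball x r) ≤ ENNReal.ofReal (Cμ * r ^ α))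
    (hρ0 : 0 < q * ρ / 2) (hρα : q * ρ / 2 < α) :
    ∃ C > 0, ∀ g h : ℝ → ℝ → ℂ,
      Measurable (Function.uncurry g) → Measurable (Function.uncurry h) →
      ENNReal.ofReal (norm
        (∫ x in Set.Ioo (0:ℝ) 1, ∫ t in Set.Ioo (0:ℝ) 1, ∫ x' in Set.Ioo (0:ℝ) 1,
          ∫ t' in Set.Ioo (0:ℝ) 1,
            g x t * h x' t' * ((|x - x'| ^ (-ρ) : ℝ) : ℂ)
          ∂volume ∂μ ∂volume ∂μ)) ≤
      ENNReal.ofReal C *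
        mixedNorm μ (q / (q - 1)) g * mixedNorm μ (q / (q - 1)) h := by
  set β := q * ρ / 2
  set p := q / (q - 1) with hp
  set ν := μ.restrict (Ioo (0:ℝ) 1)
  have hp1 : 1 ≤ p := by rw [hp, le_div_iff₀ (by linarith)]; linarith
  have hpr : 1 / p + 1 / p + 1 / (q / 2) = 2 := by rw [hp]; field_simp; ring
  have hgeom : 0 < 1 - (2:ℝ) ^ (β - α) :=
    sub_pos.2 (Real.rpow_lt_one_of_one_lt_of_neg one_lt_two (by linarith))
  set a := Cμ * 2 ^ (α + β) * (1 - 2 ^ (β - α))⁻¹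
  have ha : 0 < a := by positivity
  have : IsFiniteMeasure ν := isFiniteMeasure_restrict.2 <| by
    rw [Real.Ioo_eq_ball]
    exact ((hμ _ _ (by norm_num)).trans_lt ENNReal.ofReal_lt_top).ne
  refine ⟨a ^ (1 / (q / 2)), by positivity, fun g h hg hh => ?_⟩
  set K : ℝ → ℝ → ℝ≥0∞ := fun x y => ENNReal.ofReal (|x - y| ^ (-ρ)) with hK
  have hK_enorm (x y : ℝ) : ‖((|x - y| ^ (-ρ) : ℝ) : ℂ)‖ₑ = K x y := by
    rw [← ofReal_norm, Complex.norm_real, Real.norm_of_nonneg (by positivity)]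
  have hK_pow (x y : ℝ) : K x y ^ (q / 2) = ENNReal.ofReal (|x - y| ^ (-β)) := by
    rw [ENNReal.ofReal_rpow_of_nonneg (by positivity) (by positivity),
      ← Real.rpow_mul (abs_nonneg _)]
    congr 2
    ring
  have hrow : ∀ x ∈ Ioo (0:ℝ) 1, ∫⁻ y, K x y ^ (q / 2) ∂ν ≤ ENNReal.ofReal a := fun x hx => by
    simpa only [hK_pow] using lintegral_Ioo_rpow_neg_abs_sub_le hμ hρ0 hρα hx
  have hcol : ∀ y ∈ Ioo (0:ℝ) 1, ∫⁻ x, K x y ^ (q / 2) ∂ν ≤ ENNReal.ofReal a := by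
    simpa only [hK, abs_sub_comm] using hrow
  rw [ofReal_norm]
  refine (enorm_integral_bilinear_le fun x => hg.of_uncurry_left.aemeasurable).trans ?_
  simp_rw [hK_enorm]
  refine (lintegral_lintegral_mul_kernel_le (μ := ν) (ν := ν) hp1 hp1 (by linarith) hpr
    hg.enorm.lintegral_prod_right' hh.enorm.lintegral_prod_right' (by fun_prop)
    (ae_restrict_of_forall_mem measurableSet_Ioo hrow)
    (ae_restrict_of_forall_mem measurableSet_Ioo hcol)).trans_eq ?_
  rw [ENNReal.ofReal_rpow_of_pos ha]
  -- `‖z‖ₑ` unfolds to `(‖z‖₊ : ℝ≥0∞)`, the form used in `mixedNorm`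
  rfl

/-- Lemma 2.1, estimate (7): the Hardy–Littlewood–Sobolev-type bilinear estimate with kernel
`|x − x'|^{−ρ}` for an `α`-dimensional measure `μ` with constant `C_μ`, when `0 < qρ/2 < α`. -/
theorem stmt8 (α q Cμ ρ : ℝ) (hα : 0 < α) (hα1 : α ≤ 1) (hq : 2 ≤ q) (hCμ : 0 < Cμ)
    (μ : Measure ℝ)
    (hμ : ∀ x : ℝ, ∀ r : ℝ, 0 < r → μ (Metric.ball x r) ≤ ENNReal.ofReal (Cμ * r ^ α))
    (hρ0 : 0 < q * ρ / 2) (hρα : q * ρ / 2 < α) :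
    ∃ C > 0, ∀ g h : ℝ → ℝ → ℂ,
      Measurable (Function.uncurry g) → Measurable (Function.uncurry h) →
      ENNReal.ofReal (norm
        (∫ x in Set.Ioo (0:ℝ) 1, ∫ t in Set.Ioo (0:ℝ) 1, ∫ x' in Set.Ioo (0:ℝ) 1,
          ∫ t' in Set.Ioo (0:ℝ) 1,
            g x t * h x' t' * ((|x - x'| ^ (-ρ) : ℝ) : ℂ)
          ∂volume ∂μ ∂volume ∂μ)) ≤
      ENNReal.ofReal C *
        mixedNorm μ (q / (q - 1)) g * mixedNorm μ (q / (q - 1)) h :=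
  stmt8_general α q Cμ ρ hq hCμ μ hμ hρ0 hρα
end
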